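/- arXiv:2602.18957 — 3 statements merged into one kernel-verified Lean document; each statement's English description precedes it below -/
import Mathlib

section
/- Let E be a nonempty finite set, let w : E → ℝ assign a strictly positive weight w(e) to every e ∈ E, and let (T_e)_{e∈E} be independent real random variables on a probability space with T_e Exp(w(e))-distributed. Let S = min_{e∈E} T_e and let F be the almost surely unique index e ∈ E attaining this minimum. Then the random variables S and F are independent. -/
/-!
Fix an index `e` and let `c = ∑_{f ≠ e} w f`. By independence, `min_{f ≠ e} T f` has survival
function `x ↦ exp (-c x⁺)` and is independent of `T e`, so integrating against the `Exp (w e)`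
law of `T e` gives, with `W = ∑ f, w f`,
`P (S > a, F = e) = P (a < T e < min_{f ≠ e} T f) = (w e / W) exp (-W a⁺)`
(multiplying the density by `exp (-c x)` turns `Exp (w e)` into a multiple of `Exp W`).
This factorises into a function of `a` times a function of `e`, and the rays `{S > a}` form a
π-system generating `σ(S)`.
-/

open MeasureTheory ProbabilityTheory Set

open scoped ENNReal

lemma expMeasure_Ioi {r : ℝ} (hr : 0 < r) (a : ℝ) :
    expMeasure r (Ioi a) = ENNReal.ofReal (Real.exp (-(r * max a 0))) := by
  have := isProbabilityMeasure_expMeasure hr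
  rw [← compl_Iic, prob_compl_eq_one_sub measurableSet_Iic, ← ofReal_cdf, cdf_expMeasure_eq hr]
  split_ifs with ha
  · have he : Real.exp (-(r * a)) ≤ 1 := Real.exp_le_one_iff.mpr (neg_nonpos.mpr (by positivity))
    rw [max_eq_left ha, ← ENNReal.ofReal_one, ← ENNReal.ofReal_sub _ (sub_nonneg.mpr he),
      sub_sub_cancel]
  · simp [max_eq_right (not_le.mp ha).le]

lemma expMeasure_eq_withDensity (r : ℝ) :
    expMeasure r = volume.withDensity (exponentialPDF r) :=
  rfl

lemma exponentialPDF_mul_exp_neg {r c : ℝ} (hr : 0 < r) (hc : 0 ≤ c) (x : ℝ) :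
    exponentialPDF r x * ENNReal.ofReal (Real.exp (-(c * max x 0)))
      = ENNReal.ofReal (r / (r + c)) * exponentialPDF (r + c) x := by
  rcases lt_or_ge x 0 with hx | hx
  · simp [exponentialPDF_of_neg hx]
  · rw [exponentialPDF_of_nonneg hx, exponentialPDF_of_nonneg hx, max_eq_left hx,
      ← ENNReal.ofReal_mul (by positivity), ← ENNReal.ofReal_mul (by positivity)]
    congr 1
    rw [mul_assoc, ← Real.exp_add]
    field_simp
    ring_nf

lemma setLIntegral_exp_neg_expMeasure {r c : ℝ} (hr : 0 < r) (hc : 0 ≤ c) (a : ℝ) :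
    ∫⁻ x in Ioi a, ENNReal.ofReal (Real.exp (-(c * max x 0))) ∂expMeasure r
      = ENNReal.ofReal (r / (r + c) * Real.exp (-((r + c) * max a 0))) := by
  have hpdf (s : ℝ) : Measurable (exponentialPDF s) :=
    (measurable_exponentialPDFReal s).ennreal_ofReal
  rw [expMeasure_eq_withDensity, setLIntegral_withDensity_eq_setLIntegral_mul _ (hpdf r)
    (by fun_prop) measurableSet_Ioi]
  simp only [Pi.mul_apply, exponentialPDF_mul_exp_neg hr hc]
  rw [lintegral_const_mul _ (hpdf _), ← withDensity_apply _ measurableSet_Ioi,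
    ← expMeasure_eq_withDensity, expMeasure_Ioi (by linarith),
    ← ENNReal.ofReal_mul (by positivity)]

lemma lt_inf'_and_eq_iff_of_forall_ne_lt {E α : Type*} [Fintype E] [Nonempty E] [LinearOrder α]
    {t : E → α} {m : E} (hm : ∀ e, e ≠ m → t m < t e) (a : α) (e : E) :
    (a < Finset.univ.inf' Finset.univ_nonempty t ∧ m = e) ↔
      (a < t e ∧ ∀ f, f ≠ e → t e < t f) := by
  have hinf : Finset.univ.inf' Finset.univ_nonempty t = t m :=
    le_antisymm (Finset.inf'_le _ (Finset.mem_univ m)) <| Finset.le_inf' _ _ fun f _ ↦ by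
      rcases eq_or_ne f m with rfl | hf
      exacts [le_rfl, (hm f hf).le]
  rw [hinf]
  constructor
  · rintro ⟨ha, rfl⟩
    exact ⟨ha, hm⟩
  · rintro ⟨ha, he⟩
    obtain rfl : m = e := by_contra fun hne ↦ (hm e (Ne.symm hne)).asymm (he m hne)
    exact ⟨ha, rfl⟩


section

variable {Ω : Type*} [MeasurableSpace Ω] {P : Measure Ω}

lemma measure_iInter_preimage_Ioi_of_iIndepFun {ι : Type*} {T : ι → Ω → ℝ}
    (hT : ∀ i, Measurable (T i)) (hindep : iIndepFun T P) {w : ι → ℝ} (hw : ∀ i, 0 < w i)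
    (hlaw : ∀ i, P.map (T i) = expMeasure (w i)) (s : Finset ι) (x : ℝ) :
    P (⋂ i ∈ s, T i ⁻¹' Ioi x)
      = ENNReal.ofReal (Real.exp (-((∑ i ∈ s, w i) * max x 0))) := by
  have hmarginal (i : ι) :
      P (T i ⁻¹' Ioi x) = ENNReal.ofReal (Real.exp (-(w i * max x 0))) := by
    rw [← Measure.map_apply (hT i) measurableSet_Ioi, hlaw i, expMeasure_Ioi (hw i)]
  rw [hindep.measure_inter_preimage_eq_mul s fun _ _ ↦ measurableSet_Ioi]
  simp only [hmarginal]
  rw [← ENNReal.ofReal_prod_of_nonneg fun _ _ ↦ (Real.exp_pos _).le, ← Real.exp_sum,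
    Finset.sum_mul, ← Finset.sum_neg_distrib]

variable [IsProbabilityMeasure P]

lemma measure_lt_and_forall_lt_of_indepFun {ι : Type*} [Countable ι] {X : Ω → ℝ}
    {Y : Ω → ι → ℝ} (hX : Measurable X) (hY : Measurable Y) (hXY : IndepFun X Y P)
    {r c : ℝ} (hr : 0 < r) (hc : 0 ≤ c) (hXlaw : P.map X = expMeasure r)
    (hYtail : ∀ x,
      P (Y ⁻¹' univ.pi fun _ ↦ Ioi x) = ENNReal.ofReal (Real.exp (-(c * max x 0))))
    (a : ℝ) :
    P {ω | a < X ω ∧ ∀ i, X ω < Y ω i}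
      = ENNReal.ofReal (r / (r + c) * Real.exp (-((r + c) * max a 0))) := by
  let D : Set (ℝ × (ι → ℝ)) := {p | a < p.1 ∧ ∀ i, p.1 < p.2 i}
  have hD : MeasurableSet D := by
    simp only [D, ofPred_and, ofPred_forall]
    exact (measurableSet_lt measurable_const measurable_fst).inter
      (.iInter fun i ↦ measurableSet_lt measurable_fst
        ((measurable_pi_apply i).comp measurable_snd))
  have hsection : (fun x ↦ P.map Y (Prod.mk x ⁻¹' D))
      = (Ioi a).indicator fun x ↦ ENNReal.ofReal (Real.exp (-(c * max x 0))) := by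
    ext x
    by_cases hx : a < x
    · have : Prod.mk x ⁻¹' D = univ.pi fun _ ↦ Ioi x := by ext v; simp [D, hx]
      rw [this, Measure.map_apply hY (.univ_pi fun _ ↦ measurableSet_Ioi), hYtail,
        indicator_of_mem (mem_Ioi.mpr hx)]
    · have : Prod.mk x ⁻¹' D = ∅ := by ext v; simp [D, hx]
      rw [this, indicator_of_notMem (mt mem_Ioi.mp hx), measure_empty]
  have := isProbabilityMeasure_expMeasure hr
  change P ((fun ω ↦ (X ω, Y ω)) ⁻¹' D) = _
  rw [← Measure.map_apply (hX.prodMk hY) hD,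
    (indepFun_iff_map_prod_eq_prod_map_map hX.aemeasurable hY.aemeasurable).mp hXY, hXlaw,
    Measure.prod_apply hD, hsection, lintegral_indicator measurableSet_Ioi,
    setLIntegral_exp_neg_expMeasure hr hc]

lemma indepFun_of_measure_preimage_Ioi_inter_preimage_singleton {E : Type*} [MeasurableSpace E]
    [Countable E] [MeasurableSingletonClass E] {S : Ω → ℝ} {F : Ω → E} (hS : Measurable S)
    (hF : Measurable F)
    (h : ∀ a e, P (S ⁻¹' Ioi a ∩ F ⁻¹' {e}) = P (S ⁻¹' Ioi a) * P (F ⁻¹' {e})) :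
    IndepFun S F P := by
  have hgenS : MeasurableSpace.comap S inferInstance
      = MeasurableSpace.generateFrom (preimage S '' range Ioi) := by
    rw [BorelSpace.measurable_eq (α := ℝ), borel_eq_generateFrom_Ioi ℝ,
      MeasurableSpace.comap_generateFrom]
  refine IndepSets.indep hS.comap_le hF.comap_le (isPiSystem_Ioi.comap S)
    (@MeasurableSpace.isPiSystem_measurableSet Ω (.comap F inferInstance)) hgenS
    (@MeasurableSpace.generateFrom_measurableSet Ω (.comap F inferInstance)).symm ?_
  rw [IndepSets_iff]
  rintro _ _ ⟨_, ⟨a, rfl⟩, rfl⟩ ⟨B, -, rfl⟩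
  have hfibres (μ : Measure Ω) : μ (F ⁻¹' B) = ∑' e : B, μ (F ⁻¹' {(e : E)}) :=
    (tsum_measure_preimage_singleton B.to_countable fun e _ ↦ hF (measurableSet_singleton e)).symm
  rw [inter_comm, ← Measure.restrict_apply' (hS measurableSet_Ioi), hfibres, hfibres,
    ← ENNReal.tsum_mul_left]
  refine tsum_congr fun e ↦ ?_
  rw [Measure.restrict_apply' (hS measurableSet_Ioi), inter_comm, h]

lemma measure_lt_and_forall_ne_lt_of_iIndepFun {E : Type*} [Fintype E] [DecidableEq E]
    {T : E → Ω → ℝ} (hT : ∀ e, Measurable (T e)) (hindep : iIndepFun T P) {w : E → ℝ}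
    (hw : ∀ e, 0 < w e) (hlaw : ∀ e, P.map (T e) = expMeasure (w e)) (e : E) (a : ℝ) :
    P {ω | a < T e ω ∧ ∀ f, f ≠ e → T e ω < T f ω}
      = ENNReal.ofReal (w e / (∑ f, w f) * Real.exp (-((∑ f, w f) * max a 0))) := by
  set s := Finset.univ.erase e
  let Y : Ω → s → ℝ := fun ω i ↦ T i ω
  have hY : Measurable Y := measurable_pi_lambda _ fun i ↦ hT i
  have hindepY : IndepFun (T e) Y P :=
    (hindep.indepFun_finset {e} s (by simp [s]) hT).comp
      (measurable_pi_apply (⟨e, Finset.mem_singleton_self e⟩ : ({e} : Finset E))) measurable_id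
  have hYtail (x : ℝ) : P (Y ⁻¹' univ.pi fun _ ↦ Ioi x)
      = ENNReal.ofReal (Real.exp (-((∑ f ∈ s, w f) * max x 0))) := by
    rw [← measure_iInter_preimage_Ioi_of_iIndepFun hT hindep hw hlaw s x]
    congr 1
    ext ω
    simp [Y]
  have hevent : {ω | a < T e ω ∧ ∀ f, f ≠ e → T e ω < T f ω}
      = {ω | a < T e ω ∧ ∀ i, T e ω < Y ω i} := by
    ext ω
    simp [Y, s]
  rw [hevent, measure_lt_and_forall_lt_of_indepFun (hT e) hY hindepY (hw e)
    (Finset.sum_nonneg fun f _ ↦ (hw f).le) (hlaw e) hYtail a,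
    Finset.add_sum_erase _ w (Finset.mem_univ e)]

end

/-- Let `E` be a nonempty finite set, `w : E → ℝ` strictly positive weights,
and `(T e)_{e ∈ E}` independent random variables with `T e` exponentially distributed with
rate `w e`. Let `S = min_{e ∈ E} T e` and let `F` be the almost surely unique index attaining
this minimum. Then `S` and `F` are independent. -/
theorem stmt_0
    {Ω : Type*} [MeasurableSpace Ω] (P : Measure Ω) [IsProbabilityMeasure P]
    {E : Type*} [Fintype E] [Nonempty E] [MeasurableSpace E] [MeasurableSingletonClass E]
    (w : E → ℝ) (hw : ∀ e, 0 < w e)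
    (T : E → Ω → ℝ) (hTmeas : ∀ e, Measurable (T e))
    (hindep : iIndepFun T P)
    (hdist : ∀ e, Measure.map (T e) P = expMeasure (w e))
    (S : Ω → ℝ) (hS : ∀ ω, S ω = Finset.univ.inf' Finset.univ_nonempty (fun e => T e ω))
    (F : Ω → E) (hFmeas : Measurable F)
    (hF : ∀ᵐ ω ∂P, ∀ e, e ≠ F ω → T (F ω) ω < T e ω) :
    IndepFun S F P := by
  classical
  set W := ∑ e, w e
  have hSmeas : Measurable S := by
    rw [show S = Finset.univ.inf' Finset.univ_nonempty T from funext fun ω ↦ by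
      rw [hS, Finset.inf'_apply]]
    exact Finset.inf'_induction _ _ (fun _ hf _ hg ↦ hf.inf hg) fun e _ ↦ hTmeas e
  have hjoint (a : ℝ) (e : E) : P (S ⁻¹' Ioi a ∩ F ⁻¹' {e})
      = ENNReal.ofReal (w e / W * Real.exp (-(W * max a 0))) := by
    rw [← measure_lt_and_forall_ne_lt_of_iIndepFun hTmeas hindep hw hdist e a]
    refine measure_congr (Filter.eventuallyEq_set.mpr ?_)
    filter_upwards [hF] with ω hω
    simpa [hS] using lt_inf'_and_eq_iff_of_forall_ne_lt hω a e
  have hStail (a : ℝ) : P (S ⁻¹' Ioi a) = ENNReal.ofReal (Real.exp (-(W * max a 0))) := by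
    rw [← measure_iInter_preimage_Ioi_of_iIndepFun hTmeas hindep hw hdist Finset.univ a]
    congr 1
    ext ω
    simp [hS]
  have hFmass (e : E) : P (F ⁻¹' {e}) = ENNReal.ofReal (w e / W) := by
    have hconull : P (S ⁻¹' Ioi (-1))ᶜ = 0 := by
      rw [prob_compl_eq_zero_iff (hSmeas measurableSet_Ioi), hStail]
      norm_num
    rw [← measure_inter_conull hconull, inter_comm, hjoint]
    norm_num
  refine indepFun_of_measure_preimage_Ioi_inter_preimage_singleton hSmeas hFmeas fun a e ↦ ?_
  rw [hjoint, hStail, hFmass, ← ENNReal.ofReal_mul (Real.exp_pos _).le, mul_comm]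
end

section
/- Let m ≥ 3 be an integer, Λ > 0, and let M_1, …, M_m be independent identically distributed real random variables, each Exp(Λ)-distributed. Set Λ̄ = (m−1)/(M_1 + ⋯ + M_m). Then Λ̄ is square-integrable, E[Λ̄] = Λ, and Var(Λ̄) = Λ²/(m−2); consequently the relative standard error √(Var(Λ̄))/Λ equals 1/√(m−2). -/
/-!
The sum `S = M₁ + ⋯ + Mₘ` is `Gamma(m, Λ)`-distributed: convolving the density of `Gamma(a, Λ)`
with that of `Exp(Λ) = Gamma(1, Λ)` gives the density of `Gamma(a + 1, Λ)`. The moments of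
`Λ̄ = (m - 1) / S` are then negative moments of the gamma law, and these are computed by tilting:
`x ^ s · Gamma(a, r)` is `Γ(a + s) / (r ^ s Γ(a))` times `Gamma(a + s, r)`, a finite measure as soon
as `a + s > 0`. With `s = -1, -2` and `Γ(a) = (a - 1)(a - 2) Γ(a - 2)` this gives
`E[Λ̄] = Λ` and `E[Λ̄²] = (m - 1) Λ² / (m - 2)`.
-/

open MeasureTheory ProbabilityTheory Real Set

namespace ProbabilityTheory

@[fun_prop]
lemma measurable_gammaPDF (a r : ℝ) : Measurable (gammaPDF a r) :=
  (measurable_gammaPDFReal a r).ennreal_ofReal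

lemma gammaPDF_lconvolution_exponentialPDF {a r : ℝ} (ha : 0 < a) (hr : 0 < r) :
    gammaPDF a r ⋆ₗ exponentialPDF r = gammaPDF (a + 1) r := by
  ext t
  rw [lconvolution_def]
  rcases lt_or_ge t 0 with ht | ht
  · rw [gammaPDF_of_neg ht, ← lintegral_zero]
    refine lintegral_congr fun y => ?_
    rcases lt_or_ge y 0 with hy | hy
    · rw [gammaPDF_of_neg hy, zero_mul]
    · rw [exponentialPDF_of_neg (by linarith), mul_zero]
  have hΓ := Gamma_pos_of_pos ha
  set C := r ^ (a + 1) / Gamma a * exp (-(r * t)) with hC_def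
  have hC : 0 ≤ C := by positivity
  have hpoint : ∀ y, gammaPDF a r y * exponentialPDF r (-y + t)
      = (Icc 0 t).indicator (fun y => ENNReal.ofReal (C * y ^ (a - 1))) y := by
    intro y
    by_cases hy : y ∈ Icc 0 t
    · have hy0 := hy.1
      rw [indicator_of_mem hy, gammaPDF_of_nonneg hy0,
        exponentialPDF_of_nonneg (by linarith [hy.2]), ← ENNReal.ofReal_mul (by positivity)]
      congr 1
      have hexp : exp (-(r * y)) * exp (-(r * (-y + t))) = exp (-(r * t)) := by
        rw [← exp_add]; ring_nf
      rw [hC_def, rpow_add hr, rpow_one]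
      linear_combination (r ^ a / Gamma a * y ^ (a - 1) * r) * hexp
    · rw [indicator_of_notMem hy]
      rcases not_and_or.mp hy with hy | hy
      · rw [gammaPDF_of_neg (not_le.mp hy), zero_mul]
      · rw [exponentialPDF_of_neg (by linarith [not_le.mp hy]), mul_zero]
  simp_rw [hpoint]
  rw [lintegral_indicator measurableSet_Icc, ← ofReal_integral_eq_lintegral_ofReal,
    gammaPDF_of_nonneg ht, integral_Icc_eq_integral_Ioc, ← intervalIntegral.integral_of_le ht,
    intervalIntegral.integral_const_mul, integral_rpow (Or.inl (by linarith)),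
    Gamma_add_one ha.ne']
  · congr 1
    rw [sub_add_cancel, zero_rpow ha.ne', sub_zero, add_sub_cancel_right, hC_def]
    field_simp
  · exact (intervalIntegrable_iff_integrableOn_Icc_of_le ht).1
      ((intervalIntegral.intervalIntegrable_rpow' (by linarith)).const_mul C)
  · filter_upwards [ae_restrict_mem measurableSet_Icc] with y hy
    exact mul_nonneg hC (rpow_nonneg hy.1 _)

lemma gammaMeasure_conv_expMeasure {a r : ℝ} (ha : 0 < a) (hr : 0 < r) :
    gammaMeasure a r ∗ expMeasure r = gammaMeasure (a + 1) r := by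
  rw [gammaMeasure, expMeasure, gammaMeasure,
    conv_withDensity_eq_lconvolution (measurable_gammaPDF a r) (measurable_gammaPDF 1 r)]
  exact congrArg _ (gammaPDF_lconvolution_exponentialPDF ha hr)

lemma iIndepFun.hasLaw_sum_gammaMeasure {Ω ι : Type*} [MeasurableSpace Ω] {P : Measure Ω}
    {M : ι → Ω → ℝ} {r : ℝ} (hr : 0 < r) (hmeas : ∀ i, Measurable (M i))
    (hindep : iIndepFun M P) (hlaw : ∀ i, HasLaw (M i) (expMeasure r) P)
    {s : Finset ι} (hs : s.Nonempty) :
    HasLaw (∑ i ∈ s, M i) (gammaMeasure s.card r) P := by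
  induction hs using Finset.Nonempty.cons_induction with
  | singleton i => simpa [expMeasure] using hlaw i
  | cons i s hi hs ih =>
    have hcard : (0 : ℝ) < s.card := by simpa using hs.card_pos
    have := isProbabilityMeasure_gammaMeasure hcard hr
    have := isProbabilityMeasure_expMeasure hr
    rw [Finset.sum_cons, add_comm, Finset.card_cons, Nat.cast_succ,
      ← gammaMeasure_conv_expMeasure hcard hr]
    exact (hindep.indepFun_finsetSum_of_notMem hmeas hi).hasLaw_add ih (hlaw i)

lemma ae_pos_gammaMeasure (a r : ℝ) : ∀ᵐ x ∂gammaMeasure a r, 0 < x := by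
  rw [gammaMeasure, ae_withDensity_iff (measurable_gammaPDF a r)]
  filter_upwards [volume.ae_ne 0] with x hx0 hx
  exact lt_of_le_of_ne (not_lt.mp fun hneg => hx (gammaPDF_of_neg hneg)) hx0.symm

lemma gammaPDF_mul_ofReal_rpow {a r s : ℝ} (ha : 0 < a) (hr : 0 < r) (has : 0 < a + s)
    {x : ℝ} (hx : x ≠ 0) :
    gammaPDF a r x * ENNReal.ofReal (x ^ s)
      = ENNReal.ofReal (Gamma (a + s) / (r ^ s * Gamma a)) * gammaPDF (a + s) r x := by
  rcases hx.lt_or_gt with hx | hx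
  · rw [gammaPDF_of_neg hx, gammaPDF_of_neg hx, zero_mul, mul_zero]
  have := Gamma_pos_of_pos ha
  have := Gamma_pos_of_pos has
  have hxpow : x ^ (a + s - 1) = x ^ (a - 1) * x ^ s := by rw [← rpow_add hx]; ring_nf
  rw [gammaPDF_of_nonneg hx.le, gammaPDF_of_nonneg hx.le, ← ENNReal.ofReal_mul (by positivity),
    ← ENNReal.ofReal_mul (by positivity), rpow_add hr, hxpow]
  congr 1
  field_simp

lemma lintegral_ofReal_rpow_gammaMeasure {a r s : ℝ} (ha : 0 < a) (hr : 0 < r)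
    (has : 0 < a + s) :
    ∫⁻ x, ENNReal.ofReal (x ^ s) ∂gammaMeasure a r
      = ENNReal.ofReal (Gamma (a + s) / (r ^ s * Gamma a)) := by
  rw [gammaMeasure, lintegral_withDensity_eq_lintegral_mul _ (measurable_gammaPDF a r)
      (by fun_prop), ← mul_one (ENNReal.ofReal _), ← lintegral_gammaPDF_eq_one has hr,
    ← lintegral_const_mul _ (measurable_gammaPDF _ r)]
  refine lintegral_congr_ae ?_
  filter_upwards [volume.ae_ne 0] with x hx
  exact gammaPDF_mul_ofReal_rpow ha hr has hx

lemma integrable_rpow_gammaMeasure {a r s : ℝ} (ha : 0 < a) (hr : 0 < r) (has : 0 < a + s) :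
    Integrable (fun x => x ^ s) (gammaMeasure a r) := by
  refine (lintegral_ofReal_ne_top_iff_integrable (by fun_prop) ?_).1 ?_
  · filter_upwards [ae_pos_gammaMeasure a r] with x hx using rpow_nonneg hx.le s
  · rw [lintegral_ofReal_rpow_gammaMeasure ha hr has]
    exact ENNReal.ofReal_ne_top

lemma integral_rpow_gammaMeasure {a r s : ℝ} (ha : 0 < a) (hr : 0 < r) (has : 0 < a + s) :
    ∫ x, x ^ s ∂gammaMeasure a r = Gamma (a + s) / (r ^ s * Gamma a) := by
  rw [integral_eq_lintegral_of_nonneg_ae, lintegral_ofReal_rpow_gammaMeasure ha hr has,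
    ENNReal.toReal_ofReal]
  · have := Gamma_pos_of_pos ha
    have := Gamma_pos_of_pos has
    positivity
  · filter_upwards [ae_pos_gammaMeasure a r] with x hx using rpow_nonneg hx.le s
  · fun_prop

lemma _root_.Real.Gamma_eq_sub_one_mul {a : ℝ} (ha : a ≠ 1) :
    Gamma a = (a - 1) * Gamma (a - 1) := by
  rw [← Gamma_add_one (sub_ne_zero.mpr ha), sub_add_cancel]

lemma div_ae_eq_mul_rpow_neg_one_gammaMeasure (a r c : ℝ) :
    (fun x => c / x) =ᵐ[gammaMeasure a r] fun x => c * x ^ (-1 : ℝ) := by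
  filter_upwards [ae_pos_gammaMeasure a r] with x hx
  rw [rpow_neg_one, div_eq_mul_inv]

lemma div_sq_ae_eq_mul_rpow_neg_two_gammaMeasure (a r c : ℝ) :
    (fun x => (c / x) ^ 2) =ᵐ[gammaMeasure a r] fun x => c ^ 2 * x ^ (-2 : ℝ) := by
  filter_upwards [ae_pos_gammaMeasure a r] with x hx
  rw [rpow_neg hx.le, div_pow, div_eq_mul_inv, rpow_two]

lemma integral_div_gammaMeasure {a r : ℝ} (ha : 1 < a) (hr : 0 < r) (c : ℝ) :
    ∫ x, c / x ∂gammaMeasure a r = c * r / (a - 1) := by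
  have hΓ := Gamma_eq_sub_one_mul (a := a) (by linarith)
  have := Gamma_pos_of_pos (by linarith : 0 < a - 1)
  rw [integral_congr_ae (div_ae_eq_mul_rpow_neg_one_gammaMeasure a r c), integral_const_mul,
    integral_rpow_gammaMeasure (by linarith) hr (by linarith), rpow_neg_one, hΓ,
    ← sub_eq_add_neg]
  field_simp

lemma integral_div_sq_gammaMeasure {a r : ℝ} (ha : 2 < a) (hr : 0 < r) (c : ℝ) :
    ∫ x, (c / x) ^ 2 ∂gammaMeasure a r = c ^ 2 * r ^ 2 / ((a - 1) * (a - 2)) := by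
  have hΓ : Gamma a = (a - 1) * ((a - 2) * Gamma (a - 2)) := by
    rw [Gamma_eq_sub_one_mul (a := a) (by linarith),
      Gamma_eq_sub_one_mul (a := a - 1) (by linarith), sub_sub, one_add_one_eq_two]
  have := Gamma_pos_of_pos (by linarith : 0 < a - 2)
  rw [integral_congr_ae (div_sq_ae_eq_mul_rpow_neg_two_gammaMeasure a r c), integral_const_mul,
    integral_rpow_gammaMeasure (by linarith) hr (by linarith), rpow_neg hr.le, rpow_two, hΓ,
    ← sub_eq_add_neg]
  field_simp

lemma memLp_div_gammaMeasure {a r : ℝ} (ha : 2 < a) (hr : 0 < r) (c : ℝ) :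
    MemLp (fun x => c / x) 2 (gammaMeasure a r) := by
  refine (memLp_two_iff_integrable_sq (by fun_prop)).2 ?_
  refine Integrable.congr ?_ (div_sq_ae_eq_mul_rpow_neg_two_gammaMeasure a r c).symm
  exact (integrable_rpow_gammaMeasure (by linarith) hr (by linarith)).const_mul _

lemma variance_div_gammaMeasure {a r : ℝ} (ha : 2 < a) (hr : 0 < r) (c : ℝ) :
    Var[fun x => c / x; gammaMeasure a r] = c ^ 2 * r ^ 2 / ((a - 1) ^ 2 * (a - 2)) := by
  have := isProbabilityMeasure_gammaMeasure (a := a) (by linarith) hr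
  rw [variance_eq_sub (memLp_div_gammaMeasure ha hr c), Pi.pow_def,
    integral_div_sq_gammaMeasure ha hr, integral_div_gammaMeasure (by linarith) hr]
  have : a - 1 ≠ 0 := by linarith
  have : a - 2 ≠ 0 := by linarith
  field_simp
  ring

end ProbabilityTheory

theorem stmt_7_general
    {Ω : Type*} [MeasurableSpace Ω] (P : Measure Ω)
    (m : ℕ) (hm : 3 ≤ m) (Λ : ℝ) (hΛ : 0 < Λ)
    (M : Fin m → Ω → ℝ) (hmeas : ∀ i, Measurable (M i))
    (hindep : iIndepFun M P)
    (hdist : ∀ i, Measure.map (M i) P = expMeasure Λ) :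
    MemLp (fun ω => ((m : ℝ) - 1) / ∑ i, M i ω) 2 P ∧
    ∫ ω, ((m : ℝ) - 1) / ∑ i, M i ω ∂P = Λ ∧
    variance (fun ω => ((m : ℝ) - 1) / ∑ i, M i ω) P = Λ ^ 2 / ((m : ℝ) - 2) ∧
    Real.sqrt (variance (fun ω => ((m : ℝ) - 1) / ∑ i, M i ω) P) / Λ
      = 1 / Real.sqrt ((m : ℝ) - 2) := by
  have hm' : (2 : ℝ) < m := by exact_mod_cast hm
  have : Nonempty (Fin m) := ⟨⟨0, by omega⟩⟩
  have hlaw : HasLaw (fun ω => ∑ i, M i ω) (gammaMeasure m Λ) P := by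
    simpa [Finset.sum_fn] using iIndepFun.hasLaw_sum_gammaMeasure hΛ hmeas hindep
      (fun i => ⟨(hmeas i).aemeasurable, hdist i⟩) Finset.univ_nonempty
  have hpres := hlaw.measurePreserving (Finset.measurable_sum _ fun i _ => hmeas i)
  have hvar : variance (fun ω => ((m : ℝ) - 1) / ∑ i, M i ω) P = Λ ^ 2 / ((m : ℝ) - 2) := by
    rw [hpres.variance_fun_comp (by fun_prop), variance_div_gammaMeasure hm' hΛ]
    field_simp [show (m : ℝ) - 1 ≠ 0 by linarith]
  refine ⟨(memLp_div_gammaMeasure hm' hΛ _).comp_measurePreserving hpres, ?_, hvar, ?_⟩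
  · rw [← Function.comp_def (fun x => ((m : ℝ) - 1) / x), hlaw.integral_comp (by fun_prop),
      integral_div_gammaMeasure (by linarith) hΛ]
    field_simp [show (m : ℝ) - 1 ≠ 0 by linarith]
  · rw [hvar, sqrt_div (sq_nonneg Λ), sqrt_sq hΛ.le, div_right_comm, div_self hΛ.ne']

/-- For `m ≥ 3` i.i.d. `Exp(Λ)` variables `M_1, …, M_m`, the estimator
`Λ̄ = (m-1) / (M_1 + ⋯ + M_m)` is square-integrable, unbiased (`E[Λ̄] = Λ`), has variance
`Λ²/(m-2)`, and relative standard error `√Var(Λ̄)/Λ = 1/√(m-2)`. -/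
theorem stmt_7
    {Ω : Type*} [MeasurableSpace Ω] (P : Measure Ω) [IsProbabilityMeasure P]
    (m : ℕ) (hm : 3 ≤ m) (Λ : ℝ) (hΛ : 0 < Λ)
    (M : Fin m → Ω → ℝ) (hmeas : ∀ i, Measurable (M i))
    (hindep : iIndepFun M P)
    (hdist : ∀ i, Measure.map (M i) P = expMeasure Λ) :
    MemLp (fun ω => ((m : ℝ) - 1) / ∑ i, M i ω) 2 P ∧
    ∫ ω, ((m : ℝ) - 1) / ∑ i, M i ω ∂P = Λ ∧
    variance (fun ω => ((m : ℝ) - 1) / ∑ i, M i ω) P = Λ ^ 2 / ((m : ℝ) - 2) ∧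
    Real.sqrt (variance (fun ω => ((m : ℝ) - 1) / ∑ i, M i ω) P) / Λ
      = 1 / Real.sqrt ((m : ℝ) - 2) :=
  stmt_7_general P m hm Λ hΛ M hmeas hindep hdist
end

section
/- Let Ω be a finite set with weights w(x) > 0 for x ∈ Ω, and for subsets S ⊆ Ω write w(S) = Σ_{x∈S} w(x). Let (X_x)_{x∈Ω} be independent random variables with X_x Exp(w(x))-distributed, and for a nonempty subset A ⊆ Ω write A* = min_{x∈A} X_x. Then for all nonempty subsets A, B ⊆ Ω, P(B* ≤ A*) = w(B)/w(A ∪ B). -/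
/-!
The minimum of independent exponential variables is exponential with the sum of the rates,
since the survival functions `exp (-w t)` multiply. On `A ⊆ B` the event `B* ≤ A*` is sure.
Otherwise `B* ≤ A*` is the event `B* ≤ (A \ B)*`; the two minima are over disjoint families,
hence independent with rates `w(B)` and `w(A \ B)`, and for independent `Y ~ Exp(a)`,
`Z ~ Exp(b)` one has `P(Y ≤ Z) = ∫ a e^{-a y} e^{-b y} dy = a / (a + b)`.
-/

open MeasureTheory ProbabilityTheory Real Set

namespace Finset

variable {α ι : Type*} [SemilatticeInf α]

lemma inf'_attach (s : Finset ι) (hs : s.Nonempty) (f : ι → α) :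
    s.attach.inf' hs.attach (fun i => f i) = s.inf' hs f :=
  le_antisymm (le_inf' _ _ fun i hi => inf'_le _ (mem_attach s ⟨i, hi⟩))
    (le_inf' _ _ fun i _ => inf'_le _ i.2)

lemma inf'_le_inf'_iff_le_inf'_sdiff [DecidableEq ι] {A B : Finset ι} (hA : A.Nonempty)
    (hB : B.Nonempty) (hAB : (A \ B).Nonempty) (f : ι → α) :
    B.inf' hB f ≤ A.inf' hA f ↔ B.inf' hB f ≤ (A \ B).inf' hAB f := by
  simp only [le_inf'_iff, mem_sdiff]
  exact ⟨fun h i hi => h i hi.1,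
    fun h i hi => if hiB : i ∈ B then inf'_le f hiB else h i ⟨hi, hiB⟩⟩

end Finset

lemma measurable_finset_inf' {Ω ι β : Type*} [MeasurableSpace Ω] [MeasurableSpace β]
    [SemilatticeInf β] [MeasurableInf₂ β] {X : ι → Ω → β} (hX : ∀ i, Measurable (X i))
    (S : Finset ι) (hS : S.Nonempty) :
    Measurable fun ω => S.inf' hS (X · ω) := by
  have h : Measurable (S.inf' hS X) :=
    Finset.inf'_induction hS X (p := Measurable) (fun _ hf _ hg => hf.inf hg) fun i _ => hX i
  convert h using 1
  ext ω
  rw [Finset.inf'_apply]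

namespace ProbabilityTheory

variable {Ω ι β : Type*} [MeasurableSpace Ω] [MeasurableSpace β] {P : Measure Ω}

lemma iIndepFun.indepFun_finset_inf' [SemilatticeInf β] [MeasurableInf₂ β]
    {X : ι → Ω → β} (hindep : iIndepFun X P) (hX : ∀ i, Measurable (X i)) {S T : Finset ι}
    (hST : Disjoint S T) (hS : S.Nonempty) (hT : T.Nonempty) :
    IndepFun (fun ω => S.inf' hS (X · ω)) (fun ω => T.inf' hT (X · ω)) P := by
  have factor (U : Finset ι) (hU : U.Nonempty) : (fun ω => U.inf' hU (X · ω)) =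
      (fun v : U → β => U.attach.inf' hU.attach v) ∘ fun ω (i : U) => X i ω := by
    funext ω
    exact (Finset.inf'_attach U hU (X · ω)).symm
  have hmin (U : Finset ι) (hU : U.Nonempty) :
      Measurable fun v : U → β => U.attach.inf' hU.attach v :=
    measurable_finset_inf' measurable_pi_apply _ _
  rw [factor S hS, factor T hT]
  exact (hindep.indepFun_finset S T hST hX).comp (hmin S hS) (hmin T hT)

lemma iIndepFun.measure_le_finset_inf' [LinearOrder β] [TopologicalSpace β]
    [OrderClosedTopology β] [OpensMeasurableSpace β] {X : ι → Ω → β}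
    (hindep : iIndepFun X P) (S : Finset ι) (hS : S.Nonempty) (t : β) :
    P ((fun ω => S.inf' hS (X · ω)) ⁻¹' Ici t) = ∏ i ∈ S, P (X i ⁻¹' Ici t) := by
  have hinter : (fun ω => S.inf' hS (X · ω)) ⁻¹' Ici t = ⋂ i ∈ S, X i ⁻¹' Ici t := by
    ext ω
    simp [Finset.le_inf'_iff]
  rw [hinter, hindep.meas_biInter fun i _ => ⟨Ici t, measurableSet_Ici, rfl⟩]

lemma IndepFun.measure_le_eq_lintegral [IsFiniteMeasure P] {Y Z : Ω → ℝ} (hY : Measurable Y)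
    (hZ : Measurable Z) (hindep : IndepFun Y Z P) :
    P {ω | Y ω ≤ Z ω} = ∫⁻ y, P.map Z (Ici y) ∂P.map Y := by
  have hle : MeasurableSet {p : ℝ × ℝ | p.1 ≤ p.2} :=
    measurableSet_le measurable_fst measurable_snd
  calc P {ω | Y ω ≤ Z ω} = P.map (fun ω => (Y ω, Z ω)) {p | p.1 ≤ p.2} :=
        (Measure.map_apply (hY.prodMk hZ) hle).symm
    _ = ((P.map Y).prod (P.map Z)) {p | p.1 ≤ p.2} := by
        rw [(indepFun_iff_map_prod_eq_prod_map_map hY.aemeasurable hZ.aemeasurable).1 hindep]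
    _ = ∫⁻ y, P.map Z (Ici y) ∂P.map Y := Measure.prod_apply hle

instance nullSingletonClass_expMeasure {r : ℝ} : NullSingletonClass (expMeasure r) := by
  unfold expMeasure gammaMeasure
  infer_instance

lemma expMeasure_Ici {r : ℝ} (hr : 0 < r) (t : ℝ) :
    expMeasure r (Ici t) = ENNReal.ofReal (rexp (-(r * max t 0))) := by
  have := isProbabilityMeasure_expMeasure hr
  rw [← measure_congr Ioi_ae_eq_Ici, ← compl_Iic, prob_compl_eq_one_sub measurableSet_Iic,
    ← ofReal_cdf, ← ENNReal.ofReal_one, ← ENNReal.ofReal_sub _ (cdf_nonneg _ _),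
    cdf_expMeasure_eq hr]
  split_ifs with ht
  · rw [max_eq_left ht, sub_sub_cancel]
  · simp [max_eq_right (not_le.1 ht).le]

lemma exponentialPDF_mul_ofReal_exp {a b : ℝ} (ha : 0 < a) (hb : 0 < b) (y : ℝ) :
    exponentialPDF a y * ENNReal.ofReal (rexp (-(b * max y 0)))
      = ENNReal.ofReal (a / (a + b)) * exponentialPDF (a + b) y := by
  rcases lt_or_ge y 0 with hy | hy
  · simp [exponentialPDF_of_neg hy]
  rw [exponentialPDF_of_nonneg hy, exponentialPDF_of_nonneg hy, max_eq_left hy,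
    ← ENNReal.ofReal_mul (by positivity), ← ENNReal.ofReal_mul (by positivity)]
  congr 1
  rw [mul_assoc, ← Real.exp_add]
  field_simp
  ring_nf

lemma lintegral_expMeasure_Ici {a b : ℝ} (ha : 0 < a) (hb : 0 < b) :
    ∫⁻ y, expMeasure b (Ici y) ∂expMeasure a = ENNReal.ofReal (a / (a + b)) := by
  have hdensity : expMeasure a = volume.withDensity (exponentialPDF a) := rfl
  have hpdf (r : ℝ) : Measurable (exponentialPDF r) :=
    (measurable_exponentialPDFReal r).ennreal_ofReal
  simp_rw [expMeasure_Ici hb]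
  rw [hdensity, lintegral_withDensity_eq_lintegral_mul _ (hpdf a) (by fun_prop)]
  simp only [Pi.mul_apply, exponentialPDF_mul_ofReal_exp ha hb]
  rw [lintegral_const_mul _ (hpdf _), lintegral_exponentialPDF_eq_one (by linarith), mul_one]

lemma iIndepFun.map_finset_inf'_eq_expMeasure [IsProbabilityMeasure P] {w : ι → ℝ}
    (hw : ∀ i, 0 < w i) {X : ι → Ω → ℝ} (hX : ∀ i, Measurable (X i)) (hindep : iIndepFun X P)
    (hdist : ∀ i, P.map (X i) = expMeasure (w i)) (S : Finset ι) (hS : S.Nonempty) :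
    P.map (fun ω => S.inf' hS (X · ω)) = expMeasure (∑ i ∈ S, w i) := by
  have hpos : 0 < ∑ i ∈ S, w i := Finset.sum_pos (fun i _ => hw i) hS
  have hmin := measurable_finset_inf' hX S hS
  have := Measure.isProbabilityMeasure_map (μ := P) hmin.aemeasurable
  refine Measure.ext_of_Ici _ _ fun t => ?_
  have hfactor (i : ι) : P (X i ⁻¹' Ici t) = ENNReal.ofReal (rexp (-(w i * max t 0))) := by
    rw [← Measure.map_apply (hX i) measurableSet_Ici, hdist i, expMeasure_Ici (hw i)]
  rw [Measure.map_apply hmin measurableSet_Ici, hindep.measure_le_finset_inf',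
    expMeasure_Ici hpos, Finset.prod_congr rfl fun i _ => hfactor i,
    ← ENNReal.ofReal_prod_of_nonneg fun i _ => (exp_pos _).le, ← Real.exp_sum,
    Finset.sum_mul, ← Finset.sum_neg_distrib]

end ProbabilityTheory

theorem stmt_8_general
    {Ω : Type*} [MeasurableSpace Ω] (P : Measure Ω) [IsProbabilityMeasure P]
    {ι : Type*} [DecidableEq ι]
    (w : ι → ℝ) (hw : ∀ x, 0 < w x)
    (X : ι → Ω → ℝ) (hmeas : ∀ x, Measurable (X x))
    (hindep : iIndepFun X P)
    (hdist : ∀ x, Measure.map (X x) P = expMeasure (w x))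
    (A B : Finset ι) (hA : A.Nonempty) (hB : B.Nonempty) :
    P {ω | B.inf' hB (fun x => X x ω) ≤ A.inf' hA (fun x => X x ω)}
      = ENNReal.ofReal ((∑ x ∈ B, w x) / ∑ x ∈ A ∪ B, w x) := by
  have hB_pos : 0 < ∑ x ∈ B, w x := Finset.sum_pos (fun x _ => hw x) hB
  by_cases hAB : (A \ B).Nonempty
  · have hAB_pos : 0 < ∑ x ∈ A \ B, w x := Finset.sum_pos (fun x _ => hw x) hAB
    have hBAB := hindep.indepFun_finset_inf' hmeas Finset.disjoint_sdiff hB hAB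
    simp_rw [Finset.inf'_le_inf'_iff_le_inf'_sdiff hA hB hAB]
    rw [hBAB.measure_le_eq_lintegral (measurable_finset_inf' hmeas _ hB)
        (measurable_finset_inf' hmeas _ hAB),
      hindep.map_finset_inf'_eq_expMeasure hw hmeas hdist,
      hindep.map_finset_inf'_eq_expMeasure hw hmeas hdist,
      lintegral_expMeasure_Ici hB_pos hAB_pos,
      ← Finset.union_sdiff_right, add_comm, Finset.sum_sdiff Finset.subset_union_right]
  · have hsub : A ⊆ B := by simpa [Finset.not_nonempty_iff_eq_empty] using hAB
    have hsure (ω : Ω) : B.inf' hB (X · ω) ≤ A.inf' hA (X · ω) := Finset.inf'_mono _ hsub hA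
    simp [hsure, Finset.union_eq_right.2 hsub, hB_pos.ne']

/-- For coordinated min-sketch cells `A* = min_{x ∈ A} X x` and
`B* = min_{x ∈ B} X x` of nonempty subsets `A, B` of a finite weighted set, where the `X x`
are independent `Exp(w x)` variables, `P(B* ≤ A*) = w(B) / w(A ∪ B)`. -/
theorem stmt_8
    {Ω : Type*} [MeasurableSpace Ω] (P : Measure Ω) [IsProbabilityMeasure P]
    {ι : Type*} [Fintype ι] [DecidableEq ι]
    (w : ι → ℝ) (hw : ∀ x, 0 < w x)
    (X : ι → Ω → ℝ) (hmeas : ∀ x, Measurable (X x))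
    (hindep : iIndepFun X P)
    (hdist : ∀ x, Measure.map (X x) P = expMeasure (w x))
    (A B : Finset ι) (hA : A.Nonempty) (hB : B.Nonempty) :
    P {ω | B.inf' hB (fun x => X x ω) ≤ A.inf' hA (fun x => X x ω)}
      = ENNReal.ofReal ((∑ x ∈ B, w x) / ∑ x ∈ A ∪ B, w x) :=
  stmt_8_general P w hw X hmeas hindep hdist A B hA hB
end
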